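/- arXiv:math/0106203 — 5 statements merged into one kernel-verified Lean document; each statement's English description precedes it below -/
import Mathlib

section
/- Let P be a preorder with a coded name B for a real. Then the collection I_P is a σ-ideal on Baire space: ∅ ∈ I_P; if A ∈ I_P and A' ⊆ A then A' ∈ I_P; and if A_n ∈ I_P for every n ∈ ℕ then ⋃_{n∈ℕ} A_n ∈ I_P. -/
/-- Baire space. -/
abbrev BaireR : Type := ℕ → ℕ

section Game

variable {P : Type*} [Preorder P]

/-- A coded name for a real on the preorder `P`: a family `B n m` of sets of conditions
such that conditions deciding different values at the same coordinate are incompatible. -/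
def CodedName (B : ℕ → ℕ → Set P) : Prop :=
  ∀ n m m', m ≠ m' → ∀ p ∈ B n m, ∀ p' ∈ B n m', ¬ ∃ q, q ≤ p ∧ q ≤ p'

/-- The filter generated by a descending sequence of conditions. -/
def genFilter (p : ℕ → P) : Set P := {q | ∃ i, p i ≤ q}

/-- A strategy for Adam: given the list of earlier moves and the last move played,
it produces Adam's next move.  It must be a legal move (below everything played so far)
at every descending position where it is Adam's turn, i.e. positions of odd length
`l ++ [q]` (so `l` has even length). -/
def IsAdamStrategy (σ : List P → P → P) : Prop :=
  ∀ (l : List P) (q : P), (l ++ [q]).Chain' (fun a b => b ≤ a) → l.length % 2 = 0 →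
    σ l q ≤ q ∧ ∀ r ∈ l, σ l q ≤ r

/-- A strategy for Eve: a function assigning to each position at which it is Eve's turn
(descending positions of even length, including the empty one) a condition below all
conditions played so far. -/
def IsEveStrategy (τ : List P → P) : Prop :=
  ∀ l : List P, l.Chain' (fun a b => b ≤ a) → l.length % 2 = 0 →
    ∀ r ∈ l, τ l ≤ r

/-- An infinite run `p 0 ≥ p 1 ≥ ⋯` is played according to Adam's strategy `σ`
if each odd-indexed move is produced by `σ` from the preceding position. -/
def FollowsAdam (σ : List P → P → P) (p : ℕ → P) : Prop :=
  ∀ k, p (2 * k + 1) = σ (List.ofFn fun i : Fin (2 * k) => p i) (p (2 * k))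

/-- An infinite run is played according to Eve's strategy `τ` if each even-indexed move
is produced by `τ` from the preceding position. -/
def FollowsEve (τ : List P → P) (p : ℕ → P) : Prop :=
  ∀ k, p (2 * k) = τ (List.ofFn fun i : Fin (2 * k) => p i)

/-- Eve wins the run `p` of the game `G(A)` if the generated filter evaluates the
name `B` and the valuation belongs to `A`. -/
def EveWinsRun (B : ℕ → ℕ → Set P) (A : Set BaireR) (p : ℕ → P) : Prop :=
  ∃ x : BaireR, (∀ n, (genFilter p ∩ B n (x n)).Nonempty) ∧ x ∈ A

/-- Adam has a winning strategy in the game `G(A)`;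
equivalently, `A` belongs to the collection `I_P`. -/
def AdamHasWinning (B : ℕ → ℕ → Set P) (A : Set BaireR) : Prop :=
  ∃ σ : List P → P → P, IsAdamStrategy σ ∧
    ∀ p : ℕ → P, Antitone p → FollowsAdam σ p → ¬ EveWinsRun B A p

/-- Eve has a winning strategy in the game `G(A)`. -/
def EveHasWinning (B : ℕ → ℕ → Set P) (A : Set BaireR) : Prop :=
  ∃ τ : List P → P, IsEveStrategy τ ∧
    ∀ p : ℕ → P, Antitone p → FollowsEve τ p → EveWinsRun B A p

end Game

/-! Adam's winning strategy for `A` also wins for every `A' ⊆ A`, and every legal strategy wins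
for `∅`. For a countable union, Adam plays all the games `G(A n)` at once: Cantor pairing splits
the rounds of the run into infinitely many infinite subsequences, and on the `n`-th one Adam
follows his winning strategy for `A n`. The moves of the `n`-th subsequence form a run of `G(A n)`
whose filter contains that of the whole run, because it is a subsequence of a descending
sequence; so if Eve's valuation lay in `A n`, she would also win that run. -/

lemma le_of_mem_of_isChain_append_singleton {P : Type*} [Preorder P] {l : List P} {q : P}
    (h : (l ++ [q]).IsChain (fun a b => b ≤ a)) {r : P} (hr : r ∈ l) : q ≤ r :=
  (List.pairwise_append.mp (List.isChain_iff_pairwise.mp h)).2.2 r hr q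
    (List.mem_singleton_self q)

lemma List.filter_range_eq_map_of_strictMono {e : ℕ → ℕ} (he : StrictMono e) {Q : ℕ → Bool}
    (hQ : ∀ t, Q t ↔ t ∈ Set.range e) (i : ℕ) :
    (List.range (e i)).filter Q = (List.range i).map e := by
  refine List.Pairwise.eq_of_mem_iff (r := (· < ·)) (List.pairwise_lt_range.filter _)
    (List.pairwise_lt_range.map e fun _ _ h => he h) fun t => ?_
  simp only [List.mem_filter, List.mem_range, List.mem_map, hQ]
  constructor
  · rintro ⟨ht, s, rfl⟩
    exact ⟨s, he.lt_iff_lt.mp ht, rfl⟩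
  · rintro ⟨s, hs, rfl⟩
    exact ⟨he hs, s, rfl⟩

lemma List.length_filter_range_two_mul (Q : ℕ → Bool) (K : ℕ) :
    ((List.range (2 * K)).filter fun t => Q (t / 2)).length =
      2 * ((List.range K).filter Q).length := by
  induction K with
  | zero => simp
  | succ K ih =>
    rw [show 2 * (K + 1) = 2 * K + 1 + 1 by ring, List.range_succ, List.range_succ,
      List.range_succ]
    simp only [List.filter_append, List.length_append, ih]
    have h1 : (2 * K + 1) / 2 = K := by omega
    have h2 : 2 * K / 2 = K := by omega
    cases hK : Q K
    · simp [h1, h2, hK]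
    · simp [h1, h2, hK]; ring

lemma List.ofFn_coe_eq_map_range {α : Type*} (f : ℕ → α) (K : ℕ) :
    (List.ofFn fun j : Fin K => f j) = (List.range K).map f := by
  apply List.ext_getElem <;> simp

section Games

variable {P : Type*}

lemma isAdamStrategy_of_le_last [Preorder P] {σ : List P → P → P}
    (h : ∀ l q, (l ++ [q]).IsChain (fun a b => b ≤ a) → l.length % 2 = 0 → σ l q ≤ q) :
    IsAdamStrategy σ := fun l q hchain hlen =>
  ⟨h l q hchain hlen, fun _ hr =>
    (h l q hchain hlen).trans (le_of_mem_of_isChain_append_singleton hchain hr)⟩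

lemma adamHasWinning_empty [Preorder P] (B : ℕ → ℕ → Set P) : AdamHasWinning B ∅ :=
  ⟨fun _ q => q, isAdamStrategy_of_le_last fun _ _ _ _ => le_rfl, fun _ _ _ ⟨_, _, hx⟩ => hx⟩

lemma AdamHasWinning.mono [Preorder P] {B : ℕ → ℕ → Set P} {A A' : Set BaireR} (hA : A' ⊆ A)
    (h : AdamHasWinning B A) : AdamHasWinning B A' := by
  obtain ⟨σ, hσ, hwin⟩ := h
  exact ⟨σ, hσ, fun p hp hfol ⟨x, hxB, hxA⟩ => hwin p hp hfol ⟨x, hxB, hA hxA⟩⟩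

lemma genFilter_subset_comp [Preorder P] {p : ℕ → P} (hp : Antitone p) {e : ℕ → ℕ}
    (he : StrictMono e) : genFilter p ⊆ genFilter (p ∘ e) :=
  fun _ ⟨i, hi⟩ => ⟨i, (hp (he.id_le i)).trans hi⟩

lemma EveWinsRun.comp [Preorder P] {B : ℕ → ℕ → Set P} {A : Set BaireR} {p : ℕ → P}
    (hp : Antitone p) {e : ℕ → ℕ} (he : StrictMono e) (h : EveWinsRun B A p) :
    EveWinsRun B A (p ∘ e) := by
  obtain ⟨x, hxB, hxA⟩ := h
  exact ⟨x, fun n => (hxB n).mono (Set.inter_subset_inter_left _ (genFilter_subset_comp hp he)),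
    hxA⟩

/-- Round `k` of the combined game is round `k.unpair.2` of game `k.unpair.1`, so the `s`-th move
of game `n` is move `movePos n s` of the combined game. -/
def movePos (n s : ℕ) : ℕ := 2 * Nat.pair n (s / 2) + s % 2

lemma movePos_two_mul (n j : ℕ) : movePos n (2 * j) = 2 * Nat.pair n j := by
  simp [movePos]

lemma movePos_two_mul_add_one (n j : ℕ) : movePos n (2 * j + 1) = 2 * Nat.pair n j + 1 := by
  have : (2 * j + 1) / 2 = j := by omega
  simp [movePos, this]

lemma movePos_strictMono (n : ℕ) : StrictMono (movePos n) := by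
  refine strictMono_nat_of_lt_succ fun s => ?_
  rcases Nat.even_or_odd' s with ⟨j, rfl | rfl⟩
  · rw [movePos_two_mul, movePos_two_mul_add_one]
    omega
  · have := Nat.pair_lt_pair_right n (Nat.lt_add_one j)
    rw [movePos_two_mul_add_one, show 2 * j + 1 + 1 = 2 * (j + 1) by ring, movePos_two_mul]
    omega

lemma mem_range_movePos_iff (n t : ℕ) : t ∈ Set.range (movePos n) ↔ (t / 2).unpair.1 = n := by
  constructor
  · rintro ⟨s, rfl⟩
    have : (2 * Nat.pair n (s / 2) + s % 2) / 2 = Nat.pair n (s / 2) := by omega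
    simp [movePos, this]
  · intro ht
    refine ⟨2 * (t / 2).unpair.2 + t % 2, ?_⟩
    have hpair : Nat.pair n (t / 2).unpair.2 = t / 2 := by rw [← ht, Nat.pair_unpair]
    have hdiv : (2 * (t / 2).unpair.2 + t % 2) / 2 = (t / 2).unpair.2 := by omega
    have hmod : (2 * (t / 2).unpair.2 + t % 2) % 2 = t % 2 := by omega
    rw [movePos, hdiv, hmod, hpair]
    omega

def subgame (n : ℕ) (l : List P) : List P :=
  (l.zipIdx.filter fun x => (x.2 / 2).unpair.1 = n).map Prod.fst

lemma subgame_sublist (n : ℕ) (l : List P) : (subgame n l).Sublist l := by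
  have h := (List.filter_sublist (l := l.zipIdx)
    (p := fun x => (x.2 / 2).unpair.1 = n)).map Prod.fst
  rwa [List.zipIdx_map_fst] at h

lemma length_subgame_even (n : ℕ) {l : List P} (hl : l.length % 2 = 0) :
    (subgame n l).length % 2 = 0 := by
  have hlen : (subgame n l).length =
      ((List.range l.length).filter fun t => (t / 2).unpair.1 = n).length := by
    rw [subgame, List.length_map, ← List.countP_eq_length_filter, ← List.countP_eq_length_filter,
      List.range_eq_range', ← List.zipIdx_map_snd 0 l, List.countP_map]
    rfl
  rw [hlen, show l.length = 2 * (l.length / 2) by omega,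
    List.length_filter_range_two_mul (fun k => k.unpair.1 = n)]
  omega

lemma subgame_map {α : Type*} (n : ℕ) (f : α → P) (l : List α) :
    subgame n (l.map f) = (subgame n l).map f := by
  simp only [subgame, List.zipIdx_map, List.filter_map, List.map_map]
  rfl

lemma subgame_range (n K : ℕ) :
    subgame n (List.range K) = (List.range K).filter fun t => (t / 2).unpair.1 = n := by
  induction K with
  | zero => rfl
  | succ K ih =>
    simp only [subgame] at ih
    simp only [subgame, List.range_succ, List.zipIdx_append, List.filter_append, List.map_append,
      ih, List.length_range, List.zipIdx_singleton]
    by_cases h : (K / 2).unpair.1 = n <;> simp [h]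

lemma subgame_ofFn (p : ℕ → P) (n i : ℕ) :
    subgame n (List.ofFn fun j : Fin (2 * Nat.pair n i) => p j) =
      List.ofFn fun s : Fin (2 * i) => p (movePos n s) := by
  have hfilter := List.filter_range_eq_map_of_strictMono (movePos_strictMono n)
    (Q := fun t => (t / 2).unpair.1 = n) (fun t => by simpa using (mem_range_movePos_iff n t).symm)
    (2 * i)
  rw [movePos_two_mul] at hfilter
  rw [List.ofFn_coe_eq_map_range, List.ofFn_coe_eq_map_range (fun s => p (movePos n s)),
    subgame_map, subgame_range, hfilter, List.map_map]
  rfl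

def unionStrategy (σ : ℕ → List P → P → P) (l : List P) (q : P) : P :=
  σ (l.length / 2).unpair.1 (subgame (l.length / 2).unpair.1 l) q

lemma isAdamStrategy_unionStrategy [Preorder P] {σ : ℕ → List P → P → P}
    (hσ : ∀ n, IsAdamStrategy (σ n)) : IsAdamStrategy (unionStrategy σ) := by
  refine isAdamStrategy_of_le_last fun l q hchain hlen => ?_
  set n := (l.length / 2).unpair.1
  have hsub : (subgame n l ++ [q]).IsChain (fun a b => b ≤ a) :=
    hchain.sublist ((subgame_sublist n l).append_right [q])
  exact (hσ n (subgame n l) q hsub (length_subgame_even n hlen)).1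

lemma FollowsAdam.comp_movePos {σ : ℕ → List P → P → P} {p : ℕ → P}
    (h : FollowsAdam (unionStrategy σ) p) (m : ℕ) : FollowsAdam (σ m) (p ∘ movePos m) := by
  intro k
  have hk := h (Nat.pair m k)
  simp only [unionStrategy, List.length_ofFn, Nat.mul_div_cancel_left _ two_pos,
    Nat.unpair_pair, subgame_ofFn] at hk
  simpa only [Function.comp_apply, movePos_two_mul, movePos_two_mul_add_one] using hk

lemma adamHasWinning_iUnion [Preorder P] {B : ℕ → ℕ → Set P} {A : ℕ → Set BaireR}
    (h : ∀ n, AdamHasWinning B (A n)) : AdamHasWinning B (⋃ n, A n) := by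
  choose σ hσ hwin using h
  refine ⟨unionStrategy σ, isAdamStrategy_unionStrategy hσ, ?_⟩
  rintro p hp hfol ⟨x, hxB, hxA⟩
  obtain ⟨m, hxm⟩ := Set.mem_iUnion.mp hxA
  exact hwin m (p ∘ movePos m) (hp.comp_monotone (movePos_strictMono m).monotone)
    (hfol.comp_movePos m) (EveWinsRun.comp hp (movePos_strictMono m) ⟨x, hxB, hxm⟩)

end Games

theorem stmt_0_general {P : Type*} [Preorder P]
    (B : ℕ → ℕ → Set P) :
    AdamHasWinning B (∅ : Set BaireR) ∧
    (∀ A A' : Set BaireR, A' ⊆ A → AdamHasWinning B A → AdamHasWinning B A') ∧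
    (∀ A : ℕ → Set BaireR, (∀ n, AdamHasWinning B (A n)) →
      AdamHasWinning B (⋃ n, A n)) :=
  ⟨adamHasWinning_empty B, fun _ _ => AdamHasWinning.mono, fun _ => adamHasWinning_iUnion⟩

/-- `I_P` is a σ-ideal on Baire space: it contains the empty set,
is closed under subsets, and is closed under countable unions. -/
theorem stmt_0 {P : Type*} [Preorder P]
    (B : ℕ → ℕ → Set P) (hB : CodedName B) :
    AdamHasWinning B (∅ : Set BaireR) ∧
    (∀ A A' : Set BaireR, A' ⊆ A → AdamHasWinning B A → AdamHasWinning B A') ∧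
    (∀ A : ℕ → Set BaireR, (∀ n, AdamHasWinning B (A n)) →
      AdamHasWinning B (⋃ n, A n)) :=
  stmt_0_general B
end

section
/- Let P be a preorder and suppose that for each n ∈ ℕ, σ_n is a strategy for Adam in the descending-chain game on P. Then there exists a strategy σ for Adam such that for every infinite run p_0 ≥ p_1 ≥ ⋯ played according to σ and every n ∈ ℕ, there exists an infinite run q_0 ≥ q_1 ≥ ⋯ played according to σ_n that generates the same filter as (p_i)_{i∈ℕ}. Consequently, if A_n ⊆ ℝ are sets such that σ_n is a winning strategy for Adam in G(A_n) for each n, then σ is a winning strategy for Adam in G(⋃_{n∈ℕ} A_n). -/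
/-
Adam plays all the `σₙ` at once. Enumerate his turns by pairs `⟪n, j⟫ = Nat.pair n j`: at his
turn `⟪n, j⟫` he answers as `σₙ` would at its `j`-th turn in the subrun read off at the
positions of the turns `⟪n, 0⟫, ⟪n, 1⟫, …`. Each such subrun is a run according to `σₙ`, and it
is cofinal in the descending run, so it generates the same filter. In particular a real
evaluated by a run according to the fused strategy is evaluated by a run according to every
`σₙ`, so it lies in no `Aₙ`.
-/

namespace List

variable {α : Type*} {R : α → α → Prop} [IsTrans α R]

theorem IsChain.rel_of_mem_append_singleton {l : List α} {d : α} (h : (l ++ [d]).IsChain R)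
    {a : α} (ha : a ∈ l) : R a d :=
  (pairwise_append.mp (isChain_iff_pairwise.mp h)).2.2 a ha d (mem_singleton_self d)

theorem IsChain.ofFn_getD_append {l : List α} {d : α} (h : (l ++ [d]).IsChain R)
    {f : ℕ → ℕ} (hf : StrictMono f) {k : ℕ} (hk : ∀ t < k, f t < l.length) :
    ((ofFn fun t : Fin k => l.getD (f t) d) ++ [d]).IsChain R := by
  have hl : l.Pairwise R := (pairwise_append.mp (isChain_iff_pairwise.mp h)).1
  have hget : ∀ t : Fin k, l.getD (f t) d = l[f t]'(hk t t.2) := fun t => getD_eq_getElem _ _ _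
  refine isChain_iff_pairwise.mpr (pairwise_append.mpr ⟨?_, pairwise_singleton _ _, ?_⟩)
  · refine pairwise_ofFn.mpr fun s t hst => ?_
    rw [hget, hget]
    exact pairwise_iff_getElem.mp hl _ _ _ _ (hf hst)
  · rintro a ha b hb
    obtain ⟨t, rfl⟩ := mem_ofFn.mp ha
    obtain rfl := mem_singleton.mp hb
    rw [hget]
    exact h.rel_of_mem_append_singleton (getElem_mem _)

end List

theorem genFilter_comp_of_strictMono {P : Type*} [Preorder P] {p : ℕ → P} (hp : Antitone p)
    {f : ℕ → ℕ} (hf : StrictMono f) : genFilter (p ∘ f) = genFilter p := by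
  ext r
  constructor
  · rintro ⟨i, hi⟩
    exact ⟨f i, hi⟩
  · rintro ⟨i, hi⟩
    exact ⟨i, (hp hf.le_apply).trans hi⟩

/-- The subrun simulating `σₙ` consists of the moves `2 * ⟪n, i⟫` (Eve's) and `2 * ⟪n, i⟫ + 1`
(Adam's) of the fused run, `i = 0, 1, …`. -/
def fuseIdx (n m : ℕ) : ℕ := 2 * Nat.pair n (m / 2) + m % 2

theorem fuseIdx_two_mul (n i : ℕ) : fuseIdx n (2 * i) = 2 * Nat.pair n i := by
  simp [fuseIdx]

theorem fuseIdx_two_mul_add_one (n i : ℕ) : fuseIdx n (2 * i + 1) = 2 * Nat.pair n i + 1 := by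
  simp [fuseIdx, Nat.add_div]

theorem fuseIdx_strictMono (n : ℕ) : StrictMono (fuseIdx n) := by
  refine strictMono_nat_of_lt_succ fun m => ?_
  obtain ⟨i, rfl | rfl⟩ := Nat.even_or_odd' m
  · rw [fuseIdx_two_mul, fuseIdx_two_mul_add_one]
    omega
  · rw [fuseIdx_two_mul_add_one, show 2 * i + 1 + 1 = 2 * (i + 1) by ring, fuseIdx_two_mul]
    have := Nat.pair_lt_pair_right n i.lt_add_one
    omega

theorem fuseIdx_lt {n j t : ℕ} (ht : t < 2 * j) : fuseIdx n t < 2 * Nat.pair n j := by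
  have := Nat.pair_lt_pair_right n (show t / 2 < j by omega)
  unfold fuseIdx
  omega

section Fuse

variable {P : Type*}

/-- The default `q` of `getD` is never used: the indices are in range by `fuseIdx_lt`. -/
def fuseStrategies (σs : ℕ → List P → P → P) (l : List P) (q : P) : P :=
  let nj := Nat.unpair (l.length / 2)
  σs nj.1 (List.ofFn fun t : Fin (2 * nj.2) => l.getD (fuseIdx nj.1 t) q) q

theorem fuseStrategies_eq (σs : ℕ → List P → P → P) {n j : ℕ} {l : List P}
    (hl : l.length = 2 * Nat.pair n j) (q : P) :
    fuseStrategies σs l q =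
      σs n (List.ofFn fun t : Fin (2 * j) => l.getD (fuseIdx n t) q) q := by
  simp only [fuseStrategies, show l.length / 2 = Nat.pair n j by omega, Nat.unpair_pair,
    Fin.val_cast]

theorem isAdamStrategy_fuseStrategies [Preorder P] {σs : ℕ → List P → P → P}
    (hσs : ∀ n, IsAdamStrategy (σs n)) : IsAdamStrategy (fuseStrategies σs) := by
  intro l q hchain hlen
  obtain ⟨n, j, hl⟩ : ∃ n j, l.length = 2 * Nat.pair n j :=
    ⟨(l.length / 2).unpair.1, (l.length / 2).unpair.2, by rw [Nat.pair_unpair]; omega⟩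
  have hsim := hσs n _ q
    (hchain.ofFn_getD_append (fuseIdx_strictMono n) fun t ht => hl ▸ fuseIdx_lt ht)
    (by simp)
  rw [fuseStrategies_eq σs hl]
  exact ⟨hsim.1, fun r hr => hsim.1.trans (hchain.rel_of_mem_append_singleton hr)⟩

theorem FollowsAdam.comp_fuseIdx [Preorder P] {σs : ℕ → List P → P → P} {p : ℕ → P}
    (hp : FollowsAdam (fuseStrategies σs) p) (n : ℕ) : FollowsAdam (σs n) (p ∘ fuseIdx n) := by
  intro i
  have hturn := hp (Nat.pair n i)
  rw [fuseStrategies_eq σs (n := n) (j := i) (by simp)] at hturn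
  simp only [Function.comp_apply, fuseIdx_two_mul_add_one, fuseIdx_two_mul, hturn]
  congr
  funext t
  rw [List.getD_eq_getElem _ _ (by simpa using fuseIdx_lt t.2), List.getElem_ofFn]

end Fuse

theorem stmt_1_general {P : Type*} [Preorder P]
    (B : ℕ → ℕ → Set P)
    (σs : ℕ → List P → P → P) (hσs : ∀ n, IsAdamStrategy (σs n)) :
    ∃ σ : List P → P → P, IsAdamStrategy σ ∧
      (∀ p : ℕ → P, Antitone p → FollowsAdam σ p → ∀ n, ∃ q : ℕ → P,
        Antitone q ∧ FollowsAdam (σs n) q ∧ genFilter q = genFilter p) ∧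
      (∀ A : ℕ → Set BaireR,
        (∀ n, ∀ p : ℕ → P, Antitone p → FollowsAdam (σs n) p → ¬ EveWinsRun B (A n) p) →
        ∀ p : ℕ → P, Antitone p → FollowsAdam σ p → ¬ EveWinsRun B (⋃ n, A n) p) := by
  have hsub : ∀ p : ℕ → P, Antitone p → FollowsAdam (fuseStrategies σs) p → ∀ n, ∃ q : ℕ → P,
      Antitone q ∧ FollowsAdam (σs n) q ∧ genFilter q = genFilter p := fun p hp hfol n =>
    ⟨p ∘ fuseIdx n, hp.comp_monotone (fuseIdx_strictMono n).monotone, hfol.comp_fuseIdx n,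
      genFilter_comp_of_strictMono hp (fuseIdx_strictMono n)⟩
  refine ⟨fuseStrategies σs, isAdamStrategy_fuseStrategies hσs, hsub, ?_⟩
  rintro A hA p hp hfol ⟨x, hx, hxA⟩
  obtain ⟨n, hxn⟩ := Set.mem_iUnion.mp hxA
  obtain ⟨q, hq, hqσ, hqp⟩ := hsub p hp hfol n
  exact hA n q hq hqσ ⟨x, by rwa [hqp], hxn⟩

/-- fusing countably many Adam strategies into one: there is a single
strategy `σ` for Adam such that every run according to `σ` generates, for each `n`,
the same filter as some run according to `σs n`; consequently, if each `σs n` is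
winning for Adam in `G(A n)`, then `σ` is winning for Adam in `G(⋃ n, A n)`. -/
theorem stmt_1 {P : Type*} [Preorder P]
    (B : ℕ → ℕ → Set P) (hB : CodedName B)
    (σs : ℕ → List P → P → P) (hσs : ∀ n, IsAdamStrategy (σs n)) :
    ∃ σ : List P → P → P, IsAdamStrategy σ ∧
      (∀ p : ℕ → P, Antitone p → FollowsAdam σ p → ∀ n, ∃ q : ℕ → P,
        Antitone q ∧ FollowsAdam (σs n) q ∧ genFilter q = genFilter p) ∧
      (∀ A : ℕ → Set BaireR,
        (∀ n, ∀ p : ℕ → P, Antitone p → FollowsAdam (σs n) p → ¬ EveWinsRun B (A n) p) →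
        ∀ p : ℕ → P, Antitone p → FollowsAdam σ p → ¬ EveWinsRun B (⋃ n, A n) p) :=
  stmt_1_general B σs hσs
end

section
/- Let P be a preorder with a coded name B for a real, let A ⊆ ℝ, and let (D_n)_{n∈ℕ} be dense subsets of P (for every p ∈ P and every n there is d ∈ D_n with d ≤ p). If Eve has a winning strategy in the game G(A), then Eve has a strategy which wins the strengthened game in which Eve wins a run exactly when the generated filter g evaluates the name B, val(g) ∈ A, and moreover g ∩ D_n ≠ ∅ for every n ∈ ℕ. -/
/-!
Eve plays the real game while privately running a shadow play of `G(A)` in which she follows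
her winning strategy `τ` and Adam's real moves are copied. At her `k`-th turn she plays a
condition of `D k` below `τ`'s shadow move. Her real moves thus refine the shadow moves and
Adam's moves coincide, so the shadow run is a legal run following `τ` whose generated filter is
contained in the real one: the real filter evaluates `B` to the same real in `A`, and it meets
every `D k`.
-/

section Strategies

variable {P : Type*} [Preorder P]

lemma List.IsChain.getLast_le {l : List P} (hl : l.IsChain (· ≥ ·)) (hne : l ≠ [])
    {r : P} (hr : r ∈ l) : l.getLast hne ≤ r :=
  hl.pairwise.rel_getLast hr

open Classical in
/-- A simulated move need not be legal at a position the simulation did not produce; there the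
last move of the position is a legal replacement. -/
noncomputable def legalize (c : List P → P) (l : List P) : P :=
  if ∀ r ∈ l, c l ≤ r then c l else l.getLast?.getD (c l)

lemma legalize_of_forall_le {c : List P → P} {l : List P} (h : ∀ r ∈ l, c l ≤ r) :
    legalize c l = c l :=
  if_pos h

lemma isEveStrategy_legalize (c : List P → P) : IsEveStrategy (legalize c) := by
  intro l hl _ r hr
  unfold legalize
  split_ifs with h
  · exact h r hr
  · have hne : l ≠ [] := List.ne_nil_of_mem hr
    rw [List.getLast?_eq_some_getLast hne]
    exact List.IsChain.getLast_le hl hne hr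

lemma IsEveStrategy.exists_le_mem_dense {σ : List P → P} (hσ : IsEveStrategy σ)
    {D : ℕ → Set P} (hD : ∀ n, ∀ p : P, ∃ d ∈ D n, d ≤ p) :
    ∃ σ' : List P → P, IsEveStrategy σ' ∧ ∀ l, σ' l ≤ σ l ∧ σ' l ∈ D (l.length / 2) := by
  choose f hfD hfle using hD
  exact ⟨fun l => f _ (σ l), fun l hl he r hr => (hfle _ _).trans (hσ l hl he r hr),
    fun l => ⟨hfle _ _, hfD _ _⟩⟩

lemma genFilter_anti {p s : ℕ → P} (h : ∀ i, p i ≤ s i) : genFilter s ⊆ genFilter p :=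
  fun _ ⟨i, hi⟩ => ⟨i, (h i).trans hi⟩

lemma EveWinsRun.of_genFilter_subset {B : ℕ → ℕ → Set P} {A : Set BaireR} {p s : ℕ → P}
    (hs : EveWinsRun B A s) (h : genFilter s ⊆ genFilter p) : EveWinsRun B A p := by
  obtain ⟨x, hx, hxA⟩ := hs
  exact ⟨x, fun n => (hx n).mono (Set.inter_subset_inter_left _ h), hxA⟩

end Strategies

section Shadow

variable {P : Type*}

def shadow (τ : List P → P) (p : ℕ → P) : ℕ → P
  | n => if n % 2 = 0 then τ (List.ofFn fun i : Fin n => shadow τ p i) else p n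

def shadowMove (τ : List P → P) (l : List P) : P :=
  shadow τ (fun i => l.getD i (τ [])) l.length

variable {τ : List P → P} {p : ℕ → P}

lemma shadow_even (k : ℕ) :
    shadow τ p (2 * k) = τ (List.ofFn fun i : Fin (2 * k) => shadow τ p i) := by
  rw [shadow, if_pos (by omega)]

lemma shadow_odd (k : ℕ) : shadow τ p (2 * k + 1) = p (2 * k + 1) := by
  rw [shadow, if_neg (by omega)]

lemma shadow_congr {p' : ℕ → P} {n : ℕ} (h : ∀ i < n, p i = p' i) :
    ∀ i < n, shadow τ p i = shadow τ p' i := by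
  intro i
  induction i using Nat.strong_induction_on with
  | _ i ih =>
    intro hi
    rw [shadow, shadow]
    split_ifs
    · exact congrArg τ (congrArg List.ofFn (funext fun j => ih j j.2 (j.2.trans hi)))
    · exact h i hi

lemma followsEve_shadow : FollowsEve τ (shadow τ p) :=
  shadow_even

lemma shadowMove_ofFn (k : ℕ) :
    shadowMove τ (List.ofFn fun i : Fin (2 * k) => p i) = shadow τ p (2 * k) := by
  rw [shadowMove, List.length_ofFn, shadow_even, shadow_even]
  refine congrArg τ (congrArg List.ofFn (funext fun j => shadow_congr (fun i hi => ?_) j j.2))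
  simp [hi]

variable [Preorder P]

def RefinesShadow (τ : List P → P) (p : ℕ → P) : Prop :=
  ∀ k, (∀ i < 2 * k, shadow τ p (2 * k) ≤ p i) → p (2 * k) ≤ shadow τ p (2 * k)

lemma shadow_le_of_succ_le (hp : Antitone p) {k : ℕ}
    (hs : ∀ n < 2 * k, shadow τ p (n + 1) ≤ shadow τ p n) :
    ∀ i < 2 * k, shadow τ p (2 * k) ≤ p i := by
  intro i hi
  obtain ⟨k, rfl⟩ : ∃ j, k = j + 1 := Nat.exists_eq_add_one.2 (by omega)
  calc shadow τ p (2 * (k + 1)) ≤ shadow τ p (2 * k + 1) := hs (2 * k + 1) (by omega)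
    _ = p (2 * k + 1) := shadow_odd k
    _ ≤ p i := hp (by omega)

lemma antitone_shadow (hτ : IsEveStrategy τ) (hp : Antitone p)
    (hle : RefinesShadow τ p) :
    Antitone (shadow τ p) := by
  refine antitone_nat_of_succ_le fun n => ?_
  induction n using Nat.strong_induction_on with
  | _ n ih =>
    obtain ⟨k, rfl | rfl⟩ := Nat.even_or_odd' n
    · calc shadow τ p (2 * k + 1) = p (2 * k + 1) := shadow_odd k
        _ ≤ p (2 * k) := hp (by omega)
        _ ≤ shadow τ p (2 * k) := hle k (shadow_le_of_succ_le hp ih)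
    · have hchain : (List.ofFn fun i : Fin (2 * (k + 1)) => shadow τ p i).IsChain (· ≥ ·) :=
        List.isChain_ofFn.2 fun i hi => ih i (by omega)
      rw [show 2 * k + 1 + 1 = 2 * (k + 1) by ring, shadow_even]
      exact hτ _ hchain (by rw [List.length_ofFn]; omega) _
        ((List.mem_ofFn' _ _).2 ⟨⟨2 * k + 1, by omega⟩, rfl⟩)

lemma le_shadow (hτ : IsEveStrategy τ) (hp : Antitone p)
    (hle : RefinesShadow τ p)
    (i : ℕ) : p i ≤ shadow τ p i := by
  obtain ⟨k, rfl | rfl⟩ := Nat.even_or_odd' i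
  · exact hle k (shadow_le_of_succ_le hp fun n _ => antitone_shadow hτ hp hle n.le_succ)
  · exact (shadow_odd k).ge

end Shadow

theorem stmt_3_general {P : Type*} [Preorder P]
    (B : ℕ → ℕ → Set P)
    (A : Set BaireR) (D : ℕ → Set P)
    (hD : ∀ n, ∀ p : P, ∃ d ∈ D n, d ≤ p)
    (hEve : EveHasWinning B A) :
    ∃ τ : List P → P, IsEveStrategy τ ∧
      ∀ p : ℕ → P, Antitone p → FollowsEve τ p →
        EveWinsRun B A p ∧ ∀ n, (genFilter p ∩ D n).Nonempty := by
  obtain ⟨τ, hτ, hτwin⟩ := hEve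
  obtain ⟨σ, hσ, hσ_spec⟩ := (isEveStrategy_legalize (shadowMove τ)).exists_le_mem_dense hD
  refine ⟨σ, hσ, fun p hp hfol => ⟨?_, fun n => ⟨p (2 * n), ⟨2 * n, le_rfl⟩, ?_⟩⟩⟩
  · have hle : RefinesShadow τ p := fun k hk => by
      rw [hfol k, ← shadowMove_ofFn, ← legalize_of_forall_le (c := shadowMove τ)]
      · exact (hσ_spec _).1
      · simpa [List.forall_mem_ofFn_iff, shadowMove_ofFn] using fun i : Fin (2 * k) => hk i i.2
    exact (hτwin _ (antitone_shadow hτ hp hle) followsEve_shadow).of_genFilter_subset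
      (genFilter_anti (le_shadow hτ hp hle))
  · simpa [hfol n] using (hσ_spec (List.ofFn fun i : Fin (2 * n) => p i)).2

/-- if Eve has a winning strategy in `G(A)` and `(D n)` are dense subsets
of `P`, then Eve has a strategy winning the strengthened game in which she must
moreover ensure that the generated filter meets every `D n`. -/
theorem stmt_3 {P : Type*} [Preorder P]
    (B : ℕ → ℕ → Set P) (hB : CodedName B)
    (A : Set BaireR) (D : ℕ → Set P)
    (hD : ∀ n, ∀ p : P, ∃ d ∈ D n, d ≤ p)
    (hEve : EveHasWinning B A) :
    ∃ τ : List P → P, IsEveStrategy τ ∧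
      ∀ p : ℕ → P, Antitone p → FollowsEve τ p →
        EveWinsRun B A p ∧ ∀ n, (genFilter p ∩ D n).Nonempty :=
  stmt_3_general B A D hD hEve
end

section
/- Let P be a preorder with a coded name B for a real, let Y ⊆ ℝ, and let (D_n)_{n∈ℕ} be dense subsets of P (for every p ∈ P and every n there is d ∈ D_n with d ≤ p). Suppose Eve has a winning strategy in the game G(Y). Let Z ⊆ ℝ be the set of all reals of the form val(g) where g is the filter generated by some descending ω-chain in P such that g evaluates the name B and g ∩ D_n ≠ ∅ for every n. Then Y ∩ Z ∉ I_P. -/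
section Strategy

variable {P : Type*} [Preorder P]

theorem genFilter_subset_genFilter {p q : ℕ → P} (h : ∀ i, ∃ j, q j ≤ p i) :
    genFilter p ⊆ genFilter q := by
  rintro x ⟨i, hi⟩
  obtain ⟨j, hj⟩ := h i
  exact ⟨j, hj.trans hi⟩

theorem IsEveStrategy.apply_ofFn_le {τ : List P → P} (hτ : IsEveStrategy τ) {f : ℕ → P}
    {k : ℕ} (hf : ∀ i, i + 1 < 2 * k → f (i + 1) ≤ f i) {m : ℕ} (hm : m < 2 * k) :
    τ (List.ofFn fun i : Fin (2 * k) => f i) ≤ f m :=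
  hτ _ (List.isChain_ofFn.2 fun i hi => hf i hi) (by simp) _ (List.mem_ofFn.2 ⟨⟨m, hm⟩, rfl⟩)

theorem IsAdamStrategy.apply_ofFn_le_last {σ : List P → P → P} (hσ : IsAdamStrategy σ)
    {f : ℕ → P} {k : ℕ} (hf : ∀ i < 2 * k, f (i + 1) ≤ f i) :
    σ (List.ofFn fun i : Fin (2 * k) => f i) (f (2 * k)) ≤ f (2 * k) := by
  have hlist : (List.ofFn fun i : Fin (2 * k) => f i) ++ [f (2 * k)]
      = List.ofFn fun i : Fin (2 * k + 1) => f i := by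
    rw [List.ofFn_succ', List.concat_eq_append]
    rfl
  refine (hσ _ _ ?_ (by simp)).1
  rw [hlist]
  exact List.isChain_ofFn.2 fun i hi => hf i (by omega)

end Strategy

section PairedRuns

variable {P : Type*} (σ : List P → P → P) (τ : List P → P) (ρ : ℕ → P → P)

/-- The pair `(r n, s n)`: Adam follows `σ` in `r` and Eve follows `τ` in `s`; Eve's moves in
`r` are copied from `s`, and Adam's `k`-th move in `s` is `ρ k` of his `k`-th move in `r`. -/
def pairedRuns : ℕ → P × P
  | n =>
    if n % 2 = 0 then
      let e := τ (List.ofFn fun i : Fin n => (pairedRuns i).2)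
      (e, e)
    else
      let a := σ (List.ofFn fun i : Fin (n - 1) => (pairedRuns i).1) (pairedRuns (n - 1)).1
      (a, ρ (n / 2) a)
termination_by n => n
decreasing_by all_goals omega

theorem pairedRuns_even (k : ℕ) :
    pairedRuns σ τ ρ (2 * k) =
      (τ (List.ofFn fun i : Fin (2 * k) => (pairedRuns σ τ ρ i).2),
       τ (List.ofFn fun i : Fin (2 * k) => (pairedRuns σ τ ρ i).2)) := by
  rw [pairedRuns, if_pos (by omega)]

theorem pairedRuns_odd (k : ℕ) :
    pairedRuns σ τ ρ (2 * k + 1) =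
      (σ (List.ofFn fun i : Fin (2 * k) => (pairedRuns σ τ ρ i).1) (pairedRuns σ τ ρ (2 * k)).1,
       ρ k (σ (List.ofFn fun i : Fin (2 * k) => (pairedRuns σ τ ρ i).1)
         (pairedRuns σ τ ρ (2 * k)).1)) := by
  rw [pairedRuns, if_neg (by omega)]
  simp only [Nat.add_sub_cancel, Nat.mul_add_div two_pos, Fin.val_cast, Nat.reduceDiv, add_zero]

theorem followsAdam_pairedRuns_fst : FollowsAdam σ fun n => (pairedRuns σ τ ρ n).1 :=
  fun k => congrArg Prod.fst (pairedRuns_odd σ τ ρ k)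

theorem followsEve_pairedRuns_snd : FollowsEve τ fun n => (pairedRuns σ τ ρ n).2 :=
  fun k => congrArg Prod.snd (pairedRuns_even σ τ ρ k)

variable [Preorder P] {σ τ ρ}

theorem pairedRuns_snd_le_fst (hρ : ∀ k a, ρ k a ≤ a) (n : ℕ) :
    (pairedRuns σ τ ρ n).2 ≤ (pairedRuns σ τ ρ n).1 := by
  obtain ⟨k, rfl | rfl⟩ := Nat.even_or_odd' n
  · rw [pairedRuns_even]
  · rw [pairedRuns_odd]
    exact hρ _ _

theorem pairedRuns_fst_succ_le_snd (hσ : IsAdamStrategy σ) (hτ : IsEveStrategy τ)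
    (hρ : ∀ k a, ρ k a ≤ a) (n : ℕ) :
    (pairedRuns σ τ ρ (n + 1)).1 ≤ (pairedRuns σ τ ρ n).2 := by
  induction n using Nat.strong_induction_on with
  | _ n ih =>
  have hsnd : ∀ i < n, (pairedRuns σ τ ρ (i + 1)).2 ≤ (pairedRuns σ τ ρ i).2 :=
    fun i hi => (pairedRuns_snd_le_fst hρ _).trans (ih i hi)
  have hfst : ∀ i < n, (pairedRuns σ τ ρ (i + 1)).1 ≤ (pairedRuns σ τ ρ i).1 :=
    fun i hi => (ih i hi).trans (pairedRuns_snd_le_fst hρ _)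
  -- by the induction hypothesis both runs descend below `n`, so `σ` and `τ` get legal positions
  obtain ⟨k, rfl | rfl⟩ := Nat.even_or_odd' n
  · rw [pairedRuns_odd]
    calc _ ≤ (pairedRuns σ τ ρ (2 * k)).1 :=
          hσ.apply_ofFn_le_last (f := fun n => (pairedRuns σ τ ρ n).1) hfst
      _ = (pairedRuns σ τ ρ (2 * k)).2 := by rw [pairedRuns_even]
  · rw [show 2 * k + 1 + 1 = 2 * (k + 1) by ring, pairedRuns_even]
    exact hτ.apply_ofFn_le (f := fun n => (pairedRuns σ τ ρ n).2) (fun i hi => hsnd i (by omega))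
      (by omega)

theorem antitone_pairedRuns_fst (hσ : IsAdamStrategy σ) (hτ : IsEveStrategy τ)
    (hρ : ∀ k a, ρ k a ≤ a) : Antitone fun n => (pairedRuns σ τ ρ n).1 :=
  antitone_nat_of_succ_le fun n =>
    (pairedRuns_fst_succ_le_snd hσ hτ hρ n).trans (pairedRuns_snd_le_fst hρ n)

theorem antitone_pairedRuns_snd (hσ : IsAdamStrategy σ) (hτ : IsEveStrategy τ)
    (hρ : ∀ k a, ρ k a ≤ a) : Antitone fun n => (pairedRuns σ τ ρ n).2 :=
  antitone_nat_of_succ_le fun n =>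
    (pairedRuns_snd_le_fst hρ (n + 1)).trans (pairedRuns_fst_succ_le_snd hσ hτ hρ n)

end PairedRuns

theorem stmt_6_general {P : Type*} [Preorder P]
    (B : ℕ → ℕ → Set P)
    (Y : Set BaireR) (D : ℕ → Set P)
    (hD : ∀ n, ∀ p : P, ∃ d ∈ D n, d ≤ p)
    (hEve : EveHasWinning B Y) :
    ¬ AdamHasWinning B (Y ∩ {x : BaireR | ∃ p : ℕ → P, Antitone p ∧
      (∀ n, (genFilter p ∩ B n (x n)).Nonempty) ∧
      (∀ n, (genFilter p ∩ D n).Nonempty)}) := by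
  rintro ⟨σ, hσ, hAdamWins⟩
  obtain ⟨τ, hτ, hEveWins⟩ := hEve
  choose ρ hρD hρ using hD
  set r := fun n => (pairedRuns σ τ ρ n).1
  set s := fun n => (pairedRuns σ τ ρ n).2
  have hs : Antitone s := antitone_pairedRuns_snd hσ hτ hρ
  have hsr : genFilter s ⊆ genFilter r :=
    genFilter_subset_genFilter fun i => ⟨i + 1, pairedRuns_fst_succ_le_snd hσ hτ hρ i⟩
  have hsD : ∀ k, (genFilter s ∩ D k).Nonempty := fun k =>
    ⟨s (2 * k + 1), ⟨2 * k + 1, le_rfl⟩, by simp only [s, pairedRuns_odd]; exact hρD _ _⟩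
  obtain ⟨x, hxB, hxY⟩ := hEveWins s hs (followsEve_pairedRuns_snd σ τ ρ)
  exact hAdamWins r (antitone_pairedRuns_fst hσ hτ hρ) (followsAdam_pairedRuns_fst σ τ ρ)
    ⟨x, fun n => (hxB n).mono (Set.inter_subset_inter_left _ hsr), hxY, s, hs, hxB, hsD⟩

/-- if Eve has a winning strategy in `G(Y)` and `(D n)` are dense subsets
of `P`, then `Y ∩ Z ∉ I_P`, where `Z` is the set of all valuations `val g` of filters
`g` generated by descending ω-chains in `P` which evaluate the name `B` and meet
every `D n`. -/
theorem stmt_6 {P : Type*} [Preorder P]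
    (B : ℕ → ℕ → Set P) (hB : CodedName B)
    (Y : Set BaireR) (D : ℕ → Set P)
    (hD : ∀ n, ∀ p : P, ∃ d ∈ D n, d ≤ p)
    (hEve : EveHasWinning B Y) :
    ¬ AdamHasWinning B (Y ∩ {x : BaireR | ∃ p : ℕ → P, Antitone p ∧
      (∀ n, (genFilter p ∩ B n (x n)).Nonempty) ∧
      (∀ n, (genFilter p ∩ D n).Nonempty)}) :=
  stmt_6_general B Y D hD hEve
end

section
/- Let J be a σ-ideal on Baire space ℝ = ℕ → ℕ. For every Borel set X ⊆ ℝ there exists a countable family 𝒟 of dense subsets of P_J such that for every filter G on P_J meeting every member of 𝒟 the following hold: (i) for every n ∈ ℕ there is a unique m ∈ ℕ such that some Z ∈ G satisfies Z ⊆ {s ∈ ℝ : s(n) = m}, so that the real r_G defined by letting r_G(n) be this unique m is well-defined; and (ii) r_G ∈ X if and only if some Z ∈ G satisfies Z ⊆ X. -/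
/-- A σ-ideal on Baire space: contains the empty set, closed under subsets,
closed under countable unions. -/
def IsSigmaIdeal (J : Set (Set BaireR)) : Prop :=
  ∅ ∈ J ∧ (∀ A ∈ J, ∀ A' : Set BaireR, A' ⊆ A → A' ∈ J) ∧
    ∀ A : ℕ → Set BaireR, (∀ n, A n ∈ J) → (⋃ n, A n) ∈ J

/-- A condition of the poset `P_J`: a Borel subset of Baire space not in `J`. -/
def IsCondition (J : Set (Set BaireR)) (X : Set BaireR) : Prop :=
  MeasurableSet X ∧ X ∉ J

/-- A dense subset of the poset `P_J`: a collection of conditions such that every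
condition has a Borel `J`-positive subset in the collection. -/
def IsDenseIn (J : Set (Set BaireR)) (D : Set (Set BaireR)) : Prop :=
  (∀ Y ∈ D, IsCondition J Y) ∧ ∀ X, IsCondition J X → ∃ Y ∈ D, Y ⊆ X

/-- A filter on the poset `P_J`: a nonempty collection of conditions, upward closed
(within `P_J`) and downward directed. -/
def IsFilterOn (J : Set (Set BaireR)) (G : Set (Set BaireR)) : Prop :=
  G.Nonempty ∧ (∀ X ∈ G, IsCondition J X) ∧
    (∀ X ∈ G, ∀ Y : Set BaireR, X ⊆ Y → IsCondition J Y → Y ∈ G) ∧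
    (∀ X ∈ G, ∀ Y ∈ G, ∃ Z ∈ G, Z ⊆ X ∧ Z ⊆ Y)

open Set

/-- The cylinder sets generating the product σ-algebra on Baire space. -/
def Cyl : Set (Set BaireR) := {A | ∃ n m : ℕ, A = {s | s n = m}}

lemma cyl_measurable (n m : ℕ) : MeasurableSet {s : BaireR | s n = m} := by
  have h : MeasurableSet ((fun s : BaireR => s n) ⁻¹' {m}) :=
    measurable_pi_apply n (measurableSet_singleton m)
  exact h

lemma baire_generateFrom :
    (inferInstance : MeasurableSpace BaireR) = MeasurableSpace.generateFrom Cyl := by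
  apply le_antisymm
  · have h : ∀ n : ℕ, @Measurable BaireR ℕ (MeasurableSpace.generateFrom Cyl) _
        (fun s : BaireR => s n) := by
      intro n
      refine @measurable_to_countable' ℕ BaireR _ _ (MeasurableSpace.generateFrom Cyl)
        (fun s => s n) fun m => ?_
      exact MeasurableSpace.measurableSet_generateFrom ⟨n, m, rfl⟩
    rw [show (inferInstance : MeasurableSpace BaireR) = MeasurableSpace.pi from rfl]
    exact iSup_le fun n => (h n).comap_le
  · exact MeasurableSpace.generateFrom_le (by rintro t ⟨n, m, rfl⟩; exact cyl_measurable n m)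

lemma sigmaIdeal_union {J : Set (Set BaireR)} (hJ : IsSigmaIdeal J) {A B : Set BaireR}
    (hA : A ∈ J) (hB : B ∈ J) : A ∪ B ∈ J := by
  have h : A ∪ B = ⋃ n : ℕ, (if n = 0 then A else B) := by
    ext x
    simp only [mem_union, mem_iUnion]
    constructor
    · rintro (h | h)
      · exact ⟨0, by simp [h]⟩
      · exact ⟨1, by simp [h]⟩
    · rintro ⟨n, h⟩
      by_cases hn : n = 0 <;> simp [hn] at h <;> tauto
  rw [h]
  exact hJ.2.2 _ fun n => by by_cases hn : n = 0 <;> simp [hn, hA, hB]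

lemma cond_nonempty {J : Set (Set BaireR)} (hJ : IsSigmaIdeal J) {X : Set BaireR}
    (hX : IsCondition J X) : X.Nonempty := by
  rcases X.eq_empty_or_nonempty with h | h
  · exact absurd (h ▸ hJ.1) hX.2
  · exact h

lemma meet_nonempty {J G : Set (Set BaireR)} (hJ : IsSigmaIdeal J) (hG : IsFilterOn J G)
    {Z₁ Z₂ : Set BaireR} (h1 : Z₁ ∈ G) (h2 : Z₂ ∈ G) : ∃ s, s ∈ Z₁ ∧ s ∈ Z₂ := by
  obtain ⟨Z, hZG, hs1, hs2⟩ := hG.2.2.2 Z₁ h1 Z₂ h2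
  obtain ⟨s, hs⟩ := cond_nonempty hJ (hG.2.1 Z hZG)
  exact ⟨s, hs1 hs, hs2 hs⟩

/-- The trivial dense set: all conditions. -/
def Dall (J : Set (Set BaireR)) : Set (Set BaireR) := {Y | IsCondition J Y}

lemma dall_dense (J : Set (Set BaireR)) : IsDenseIn J (Dall J) :=
  ⟨fun _ h => h, fun X hX => ⟨X, hX, subset_rfl⟩⟩

/-- The dense set of conditions deciding the `n`-th coordinate. -/
def Dcoord (J : Set (Set BaireR)) (n : ℕ) : Set (Set BaireR) :=
  {Y | IsCondition J Y ∧ ∃ m, Y ⊆ {s | s n = m}}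

lemma dcoord_dense {J : Set (Set BaireR)} (hJ : IsSigmaIdeal J) (n : ℕ) :
    IsDenseIn J (Dcoord J n) := by
  refine ⟨fun Y h => h.1, fun W hW => ?_⟩
  have hcover : W = ⋃ m, W ∩ {s | s n = m} := by
    ext s
    simp only [mem_iUnion, mem_inter_iff, mem_setOf_eq]
    exact ⟨fun h => ⟨s n, h, rfl⟩, fun ⟨m, h, _⟩ => h⟩
  have hm : ∃ m, W ∩ {s | s n = m} ∉ J := by
    by_contra h
    push_neg at h
    exact hW.2 (hcover ▸ hJ.2.2 _ h)
  obtain ⟨m, hm⟩ := hm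
  exact ⟨W ∩ {s | s n = m}, ⟨⟨hW.1.inter (cyl_measurable n m), hm⟩, m, inter_subset_right⟩,
    inter_subset_left⟩

/-- The dense set of conditions deciding membership of the generic real in `X`. -/
def Ddec (J : Set (Set BaireR)) (X : Set BaireR) : Set (Set BaireR) :=
  {Y | IsCondition J Y ∧ (Y ⊆ X ∨ Y ⊆ Xᶜ)}

lemma ddec_dense {J : Set (Set BaireR)} (hJ : IsSigmaIdeal J) {X : Set BaireR}
    (hX : MeasurableSet X) : IsDenseIn J (Ddec J X) := by
  refine ⟨fun Y h => h.1, fun W hW => ?_⟩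
  by_cases h1 : W ∩ X ∈ J
  · have h2 : W ∩ Xᶜ ∉ J := fun h2 =>
      hW.2 (hJ.2.1 _ (sigmaIdeal_union hJ h1 h2) W (inter_union_compl W X).symm.subset)
    exact ⟨W ∩ Xᶜ, ⟨⟨hW.1.inter hX.compl, h2⟩, Or.inr inter_subset_right⟩, inter_subset_left⟩
  · exact ⟨W ∩ X, ⟨⟨hW.1.inter hX, h1⟩, Or.inl inter_subset_right⟩, inter_subset_left⟩

/-- The dense set of conditions deciding, for a countable union, which member of the
union the generic real falls into (or that it avoids the union). -/
def Dsel (J : Set (Set BaireR)) (f : ℕ → Set BaireR) : Set (Set BaireR) :=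
  {Y | IsCondition J Y ∧ ((∃ n, Y ⊆ f n) ∨ Y ⊆ (⋃ n, f n)ᶜ)}

lemma dsel_dense {J : Set (Set BaireR)} (hJ : IsSigmaIdeal J) {f : ℕ → Set BaireR}
    (hf : ∀ n, MeasurableSet (f n)) : IsDenseIn J (Dsel J f) := by
  refine ⟨fun Y h => h.1, fun W hW => ?_⟩
  by_cases h1 : ∃ n, W ∩ f n ∉ J
  · obtain ⟨n, hn⟩ := h1
    exact ⟨W ∩ f n, ⟨⟨hW.1.inter (hf n), hn⟩, Or.inl ⟨n, inter_subset_right⟩⟩,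
      inter_subset_left⟩
  · push_neg at h1
    have hU : W ∩ ⋃ n, f n ∈ J := by
      rw [inter_iUnion]
      exact hJ.2.2 _ h1
    have h2 : W ∩ (⋃ n, f n)ᶜ ∉ J := fun h2 =>
      hW.2 (hJ.2.1 _ (sigmaIdeal_union hJ hU h2) W (inter_union_compl W _).symm.subset)
    exact ⟨W ∩ (⋃ n, f n)ᶜ, ⟨⟨hW.1.inter (MeasurableSet.iUnion hf).compl, h2⟩,
      Or.inr inter_subset_right⟩, inter_subset_left⟩

/-- `X` admits a countable family of dense sets forcing the generic real into `X`
(resp. out of `X`) whenever some condition in the filter is below `X` (resp. `Xᶜ`). -/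
def GoodFam (J : Set (Set BaireR)) (X : Set BaireR) : Prop :=
  ∃ 𝒟 : ℕ → Set (Set BaireR), (∀ k, IsDenseIn J (𝒟 k)) ∧
    ∀ G : Set (Set BaireR), IsFilterOn J G → (∀ k, (G ∩ 𝒟 k).Nonempty) →
      ∀ r : BaireR, (∀ n, ∃ Z ∈ G, Z ⊆ {s : BaireR | s n = r n}) →
        ((∃ Z ∈ G, Z ⊆ X) → r ∈ X) ∧ ((∃ Z ∈ G, Z ⊆ Xᶜ) → r ∉ X)

lemma goodFam_of_measurable {J : Set (Set BaireR)} (hJ : IsSigmaIdeal J) {X : Set BaireR}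
    (hX : MeasurableSet X) : GoodFam J X := by
  have hX' : @MeasurableSet BaireR (MeasurableSpace.generateFrom Cyl) X := by
    rw [← baire_generateFrom]; exact hX
  suffices h : MeasurableSet X ∧ GoodFam J X from h.2
  refine MeasurableSpace.generateFrom_induction Cyl
    (fun s _ => MeasurableSet s ∧ GoodFam J s) ?_ ?_ ?_ ?_ X hX'
  · -- generators
    rintro t ⟨n, m, rfl⟩ -
    refine ⟨cyl_measurable n m, fun _ => Dall J, fun _ => dall_dense J, ?_⟩
    intro G hG _ r hr
    obtain ⟨Z', hZ'G, hZ'sub⟩ := hr n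
    constructor
    · rintro ⟨Z, hZG, hZsub⟩
      obtain ⟨s, hs1, hs2⟩ := meet_nonempty hJ hG hZG hZ'G
      have e1 : s n = m := hZsub hs1
      have e2 : s n = r n := hZ'sub hs2
      show r n = m
      omega
    · rintro ⟨Z, hZG, hZsub⟩ hmem
      obtain ⟨s, hs1, hs2⟩ := meet_nonempty hJ hG hZG hZ'G
      have e1 : ¬ s n = m := hZsub hs1
      have e2 : s n = r n := hZ'sub hs2
      have e3 : r n = m := hmem
      omega
  · -- empty set
    refine ⟨MeasurableSet.empty, fun _ => Dall J, fun _ => dall_dense J, ?_⟩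
    intro G hG _ r _
    constructor
    · rintro ⟨Z, hZG, hZsub⟩
      obtain ⟨s, hs⟩ := cond_nonempty hJ (hG.2.1 Z hZG)
      exact absurd (hZsub hs) (notMem_empty s)
    · exact fun _ => notMem_empty r
  · -- complement
    rintro t - ⟨htm, 𝒟, hdense, hmain⟩
    refine ⟨htm.compl, 𝒟, hdense, ?_⟩
    intro G hG hmeet r hr
    obtain ⟨h1, h2⟩ := hmain G hG hmeet r hr
    refine ⟨fun h => h2 h, fun h => ?_⟩
    rw [compl_compl] at h
    simp only [mem_compl_iff, not_not]
    exact h1 h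
  · -- countable union
    intro f hfm hp
    have hm : ∀ n, MeasurableSet (f n) := fun n => (hp n).1
    choose 𝒟 hdense hmain using fun n => (hp n).2
    refine ⟨MeasurableSet.iUnion hm, fun k =>
      if k.unpair.1 = 0 then Dsel J f else 𝒟 k.unpair.2.unpair.1 k.unpair.2.unpair.2, ?_, ?_⟩
    · intro k
      by_cases hk : k.unpair.1 = 0 <;> simp only [hk, if_true, if_false, reduceIte]
      · exact dsel_dense hJ hm
      · exact hdense _ _
    · intro G hG hmeet r hr
      have hmeetD : ∀ n, ∀ j, (G ∩ 𝒟 n j).Nonempty := by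
        intro n j
        have := hmeet (Nat.pair 1 (Nat.pair n j))
        simpa [Nat.unpair_pair] using this
      have hmeetSel : (G ∩ Dsel J f).Nonempty := by
        have := hmeet (Nat.pair 0 0)
        simpa [Nat.unpair_pair] using this
      have hmeetD' : ∀ n, ∀ k, (G ∩ 𝒟 n k).Nonempty := hmeetD
      constructor
      · rintro ⟨Z, hZG, hZsub⟩
        obtain ⟨Z₀, hZ₀G, -, hcase⟩ := hmeetSel
        rcases hcase with ⟨n, hn⟩ | hc
        · exact mem_iUnion.2 ⟨n, (hmain n G hG (hmeetD' n) r hr).1 ⟨Z₀, hZ₀G, hn⟩⟩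
        · obtain ⟨s, hs1, hs2⟩ := meet_nonempty hJ hG hZG hZ₀G
          exact absurd (hZsub hs1) (hc hs2)
      · rintro ⟨Z, hZG, hZsub⟩ hmem
        obtain ⟨n, hn⟩ := mem_iUnion.1 hmem
        have hZn : Z ⊆ (f n)ᶜ := fun x hx hfx => (hZsub hx) (mem_iUnion.2 ⟨n, hfx⟩)
        exact (hmain n G hG (hmeetD' n) r hr).2 ⟨Z, hZG, hZn⟩ hn

/-- the poset of Borel sets modulo a σ-ideal `J` adds a single real,
the unique real belonging to all sets in the generic filter, and every Borel
`J`-positive set forces the generic real into itself: for every Borel `X` there is a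
countable family of dense subsets of `P_J` such that for every filter `G` meeting all
of them, (i) for every `n` there is a unique `m` such that some element of `G` is
included in `{s : s n = m}` (so the real `r_G` is well-defined), and (ii) `r_G ∈ X`
iff some element of `G` is included in `X`. -/
theorem stmt_7 (J : Set (Set BaireR)) (hJ : IsSigmaIdeal J)
    (X : Set BaireR) (hX : MeasurableSet X) :
    ∃ 𝒟 : ℕ → Set (Set BaireR), (∀ k, IsDenseIn J (𝒟 k)) ∧
      ∀ G : Set (Set BaireR), IsFilterOn J G → (∀ k, (G ∩ 𝒟 k).Nonempty) →
        (∀ n, ∃! m : ℕ, ∃ Z ∈ G, Z ⊆ {s : BaireR | s n = m}) ∧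
        (∀ r : BaireR, (∀ n, ∃ Z ∈ G, Z ⊆ {s : BaireR | s n = r n}) →
          (r ∈ X ↔ ∃ Z ∈ G, Z ⊆ X)) := by
  obtain ⟨𝒟X, hdX, hmX⟩ := goodFam_of_measurable hJ hX
  refine ⟨fun k => if k.unpair.1 = 0 then Ddec J X else
      if k.unpair.1 = 1 then Dcoord J k.unpair.2 else 𝒟X k.unpair.2, ?_, ?_⟩
  · intro k
    by_cases h0 : k.unpair.1 = 0
    · simpa [h0] using ddec_dense hJ hX
    · by_cases h1 : k.unpair.1 = 1
      · simpa [h0, h1] using dcoord_dense hJ k.unpair.2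
      · simpa [h0, h1] using hdX k.unpair.2
  · intro G hG hmeet
    have hmeetDec : (G ∩ Ddec J X).Nonempty := by
      have := hmeet (Nat.pair 0 0)
      simpa [Nat.unpair_pair] using this
    have hmeetCoord : ∀ n, (G ∩ Dcoord J n).Nonempty := by
      intro n
      have := hmeet (Nat.pair 1 n)
      simpa [Nat.unpair_pair] using this
    have hmeetX : ∀ k, (G ∩ 𝒟X k).Nonempty := by
      intro k
      have := hmeet (Nat.pair 2 k)
      simpa [Nat.unpair_pair] using this
    constructor
    · intro n
      obtain ⟨Z, hZG, -, m, hZm⟩ := hmeetCoord n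
      refine ⟨m, ⟨Z, hZG, hZm⟩, ?_⟩
      rintro m' ⟨Z', hZ'G, hZ'm⟩
      obtain ⟨s, hs1, hs2⟩ := meet_nonempty hJ hG hZ'G hZG
      have e1 : s n = m' := hZ'm hs1
      have e2 : s n = m := hZm hs2
      omega
    · intro r hr
      have hm := hmX G hG hmeetX r hr
      constructor
      · intro hrX
        obtain ⟨Z₀, hZ₀G, -, hcase⟩ := hmeetDec
        rcases hcase with h | h
        · exact ⟨Z₀, hZ₀G, h⟩
        · exact absurd hrX (hm.2 ⟨Z₀, hZ₀G, h⟩)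
      · exact hm.1
end
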